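/- arXiv:1905.08747 — 10 statements merged into one kernel-verified Lean document; each statement's English description precedes it below -/
import Mathlib

section
/- Let L ⊆ ℤ^m be a lattice and let C = [c_1, …, c_n] ⊆ ℤ^m be a finitely generated cone. If C has infinitely many lonely points with respect to L, then there exists an index i ∈ {1, …, n} such that every point of [c_i] (i.e., every point β·c_i with β ∈ ℕ) is a lonely point of C with respect to L. -/
/-- A point `v` of `A ⊆ ℤ^m` is lonely with respect to the lattice `L` if `v ∈ A` and
no other point `w ∈ A` satisfies `w - v ∈ L`. -/
def IsLonely {m : ℕ} (L : AddSubgroup (Fin m → ℤ)) (A : Set (Fin m → ℤ))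
    (v : Fin m → ℤ) : Prop :=
  v ∈ A ∧ ∀ w ∈ A, w ≠ v → w - v ∉ L


/-- The cone generated by the vectors `c 1, …, c n`: all `ℕ`-linear combinations. -/
def coneGen {m n : ℕ} (c : Fin n → (Fin m → ℤ)) : Set (Fin m → ℤ) :=
  { v | ∃ β : Fin n → ℕ, v = ∑ j, (β j : ℤ) • c j }

lemma coneGen_add {m n : ℕ} (c : Fin n → (Fin m → ℤ)) {u v : Fin m → ℤ}
    (hu : u ∈ coneGen c) (hv : v ∈ coneGen c) : u + v ∈ coneGen c := by
  obtain ⟨β, rfl⟩ := hu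
  obtain ⟨γ, rfl⟩ := hv
  refine ⟨β + γ, ?_⟩
  rw [← Finset.sum_add_distrib]
  refine Finset.sum_congr rfl fun j _ => ?_
  rw [Pi.add_apply, Nat.cast_add, add_smul]

lemma lonely_sub {m n : ℕ} (L : AddSubgroup (Fin m → ℤ)) (c : Fin n → (Fin m → ℤ))
    {v u : Fin m → ℤ} (hv : v ∈ coneGen c) (hu : u ∈ coneGen c)
    (h : IsLonely L (coneGen c) (v + u)) : IsLonely L (coneGen c) v := by
  refine ⟨hv, fun w hw hne hmem => ?_⟩
  refine h.2 (w + u) (coneGen_add c hw hu) (fun h' => hne (add_right_cancel h')) ?_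
  simpa [add_sub_add_right_eq_sub] using hmem

theorem stmt_4 {m n : ℕ} (L : AddSubgroup (Fin m → ℤ)) (c : Fin n → (Fin m → ℤ))
    (hinf : {v | IsLonely L (coneGen c) v}.Infinite) :
    ∃ i : Fin n, ∀ β : ℕ, IsLonely L (coneGen c) ((β : ℤ) • c i) := by
  set S : Set (Fin n → ℕ) := {β | IsLonely L (coneGen c) (∑ j, (β j : ℤ) • c j)} with hS
  have hSinf : S.Infinite := by
    have hsub : {v | IsLonely L (coneGen c) v} ⊆
        (fun β : Fin n → ℕ => ∑ j, (β j : ℤ) • c j) '' S := by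
      intro v hv
      obtain ⟨β, hβ⟩ := hv.1
      exact ⟨β, by simp only [hS, Set.mem_setOf_eq, ← hβ]; exact hv, hβ.symm⟩
    exact Set.Infinite.of_image _ (hinf.mono hsub)
  by_contra hcon
  push_neg at hcon
  have hbdd : ∀ i, ∃ k : ℕ, ∀ γ ∈ S, γ i < k := by
    intro i
    obtain ⟨β, hβ⟩ := hcon i
    refine ⟨β, fun γ hγ => ?_⟩
    by_contra hk
    push_neg at hk
    apply hβ
    -- γ' : coefficients of the remainder
    set γ' : Fin n → ℕ := fun j => if j = i then γ i - β else γ j with hγ'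
    have hsplit : ∑ j, (γ j : ℤ) • c j = ((β : ℤ) • c i) + ∑ j, (γ' j : ℤ) • c j := by
      have hpt : ∀ j, (γ j : ℤ) • c j =
          (if j = i then (β : ℤ) • c j else 0) + (γ' j : ℤ) • c j := by
        intro j
        by_cases h : j = i
        · subst h
          rw [if_pos rfl]
          simp only [hγ', if_pos rfl]
          rw [Nat.cast_sub hk, sub_smul]
          abel
        · simp [hγ', h]
      rw [Finset.sum_congr rfl fun j _ => hpt j, Finset.sum_add_distrib,
        Finset.sum_ite_eq' Finset.univ i (fun j => (β : ℤ) • c j), if_pos (Finset.mem_univ i)]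
    have hvmem : (β : ℤ) • c i ∈ coneGen c := by
      refine ⟨fun j => if j = i then β else 0, ?_⟩
      have : ∀ j, ((if j = i then β else 0 : ℕ) : ℤ) • c j =
          if j = i then (β : ℤ) • c j else 0 := by
        intro j; by_cases h : j = i <;> simp [h]
      rw [Finset.sum_congr rfl fun j _ => this j,
        Finset.sum_ite_eq' Finset.univ i (fun j => (β : ℤ) • c j), if_pos (Finset.mem_univ i)]
    have humem : ∑ j, (γ' j : ℤ) • c j ∈ coneGen c := ⟨γ', rfl⟩
    have hlon : IsLonely L (coneGen c) (((β : ℤ) • c i) + ∑ j, (γ' j : ℤ) • c j) := by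
      rw [← hsplit]; exact hγ
    exact lonely_sub L c hvmem humem hlon
  choose k hk using hbdd
  refine hSinf (Set.Finite.subset (Set.Finite.pi (fun i => Set.finite_Iio (k i))) ?_)
  intro γ hγ i _
  exact hk i γ hγ
end

section
/- Let L ⊆ ℤ^m be a lattice, let c_1, …, c_n ∈ ℤ^m be linearly independent over ℚ, let C = [c_1, …, c_n], and let i ∈ {1, …, n}. Then every point of [c_i] (i.e., every β·c_i with β ∈ ℕ) is a lonely point of C with respect to L if and only if L ∩ C = {0} and (L + ⟨c_i⟩) ∩ C = [c_i], where L + ⟨c_i⟩ = {ℓ + α·c_i : ℓ ∈ L, α ∈ ℤ}. -/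
lemma coeffs_zero {m n : ℕ} {c : Fin n → (Fin m → ℤ)}
    (hli : LinearIndependent ℚ (fun j : Fin n => (fun k => (c j k : ℚ)) : Fin n → (Fin m → ℚ)))
    (a : Fin n → ℤ) (h : ∑ j, a j • c j = 0) : ∀ j, a j = 0 := by
  rw [Fintype.linearIndependent_iff] at hli
  intro j
  have := hli (fun j => (a j : ℚ)) ?_ j
  · exact_mod_cast this
  · funext k
    have hk := congrFun h k
    simp only [Finset.sum_apply, Pi.smul_apply, smul_eq_mul, Pi.zero_apply] at hk ⊢
    exact_mod_cast hk

lemma single_mem {m n : ℕ} (c : Fin n → (Fin m → ℤ)) (i : Fin n) (β : ℕ) :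
    (β : ℤ) • c i ∈ coneGen c := by
  refine ⟨fun j => if j = i then β else 0, ?_⟩
  rw [Finset.sum_eq_single i] <;> simp +contextual

lemma ite_sum {m n : ℕ} (c : Fin n → (Fin m → ℤ)) (i : Fin n) (α : ℤ) :
    ∑ j, (if j = i then α else 0) • c j = α • c i := by
  rw [Finset.sum_eq_single i] <;> simp +contextual

theorem stmt_5 {m n : ℕ} (L : AddSubgroup (Fin m → ℤ)) (c : Fin n → (Fin m → ℤ))
    (hli : LinearIndependent ℚ (fun j : Fin n => (fun k => (c j k : ℚ)) : Fin n → (Fin m → ℚ)))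
    (i : Fin n) :
    (∀ β : ℕ, IsLonely L (coneGen c) ((β : ℤ) • c i)) ↔
      ((L : Set (Fin m → ℤ)) ∩ coneGen c = {0} ∧
        {v | ∃ ℓ ∈ L, ∃ α : ℤ, v = ℓ + α • c i} ∩ coneGen c
          = {v | ∃ β : ℕ, v = (β : ℤ) • c i}) := by
  constructor
  · intro h
    have h0 := h 0
    simp only [Nat.cast_zero, zero_smul] at h0
    have h1 : (L : Set (Fin m → ℤ)) ∩ coneGen c = {0} := by
      ext v
      constructor
      · rintro ⟨hvL, hvC⟩
        by_contra hv
        exact h0.2 v hvC hv (by simpa using hvL)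
      · rintro rfl
        exact ⟨L.zero_mem, ⟨0, by simp⟩⟩
    refine ⟨h1, ?_⟩
    ext v
    constructor
    · rintro ⟨⟨ℓ, hℓ, α, rfl⟩, hvC⟩
      rcases le_or_gt 0 α with hα | hα
      · refine ⟨α.toNat, ?_⟩
        by_contra hne
        have hcast : (α.toNat : ℤ) = α := Int.toNat_of_nonneg hα
        rw [hcast] at hne
        exact (h α.toNat).2 _ hvC (by rw [hcast]; exact hne)
          (by rw [hcast]; simpa using hℓ)
      · -- α < 0 : then ℓ ∈ L ∩ C, hence ℓ = 0, contradiction with lin.indep.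
        exfalso
        obtain ⟨β, hβ⟩ := hvC
        have hℓC : ℓ ∈ coneGen c := by
          refine ⟨fun j => β j + if j = i then (-α).toNat else 0, ?_⟩
          have : ℓ = (∑ j, (β j : ℤ) • c j) + (-α) • c i := by
            rw [← hβ]; module
          rw [this]
          push_cast
          rw [← ite_sum c i (-α)]
          · rw [← Finset.sum_add_distrib]
            congr 1; funext j
            rw [← add_smul]
            congr 1
            split <;> simp [Int.toNat_of_nonneg (by omega : (0:ℤ) ≤ -α)]
        have hℓ0 : ℓ ∈ ({0} : Set (Fin m → ℤ)) := h1 ▸ ⟨hℓ, hℓC⟩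
        simp only [Set.mem_singleton_iff] at hℓ0
        subst hℓ0
        rw [zero_add] at hβ
        -- α • c i = ∑ β j • c j with α < 0: contradiction
        have key : ∀ j, ((β j : ℤ) - if j = i then α else 0) = 0 := by
          apply coeffs_zero hli
          simp only [sub_smul]
          rw [Finset.sum_sub_distrib, ite_sum c i α, ← hβ, sub_self]
        have hki := key i
        rw [if_pos rfl] at hki
        omega
    · rintro ⟨β, rfl⟩
      exact ⟨⟨0, L.zero_mem, β, by simp⟩, single_mem c i β⟩
  · rintro ⟨h1, h2⟩ β
    refine ⟨single_mem c i β, ?_⟩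
    intro w hwC hne hwL
    have hw : w ∈ {v | ∃ ℓ ∈ L, ∃ α : ℤ, v = ℓ + α • c i} ∩ coneGen c :=
      ⟨⟨w - (β:ℤ) • c i, hwL, β, by ring⟩, hwC⟩
    rw [h2] at hw
    obtain ⟨γ, rfl⟩ := hw
    have hd : ((γ:ℤ) - β) • c i ∈ L := by
      have : ((γ:ℤ) - β) • c i = (γ:ℤ) • c i - (β:ℤ) • c i := by rw [sub_smul]
      rw [this]; exact hwL
    have hzero : ((γ:ℤ) - β) • c i = 0 := by
      rcases le_or_gt (β:ℤ) (γ:ℤ) with hle | hlt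
      · have hC : ((γ:ℤ) - β) • c i ∈ coneGen c := by
          have := single_mem c i ((γ:ℤ) - β).toNat
          rwa [Int.toNat_of_nonneg (by omega)] at this
        have : ((γ:ℤ) - β) • c i ∈ ({0} : Set (Fin m → ℤ)) := h1 ▸ ⟨hd, hC⟩
        simpa using this
      · have hC : ((β:ℤ) - γ) • c i ∈ coneGen c := by
          have := single_mem c i ((β:ℤ) - γ).toNat
          rwa [Int.toNat_of_nonneg (by omega)] at this
        have hd' : ((β:ℤ) - γ) • c i ∈ L := by
          have : ((β:ℤ) - γ) • c i = -(((γ:ℤ) - β) • c i) := by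
            rw [← neg_smul]; congr 1; ring
          rw [this]; exact L.neg_mem hd
        have h0 : ((β:ℤ) - γ) • c i ∈ ({0} : Set (Fin m → ℤ)) := h1 ▸ ⟨hd', hC⟩
        simp only [Set.mem_singleton_iff] at h0
        have : ((γ:ℤ) - β) • c i = -(((β:ℤ) - γ) • c i) := by
          rw [← neg_smul]; congr 1; ring
        rw [this, h0, neg_zero]
      
    apply hne
    have h' : (γ:ℤ) • c i - (β:ℤ) • c i = 0 := by rw [← sub_smul]; exact hzero
    exact sub_eq_zero.mp h'
end

section
/- Let L ⊆ ℤ^m be a lattice and let i ∈ {0, …, m}. Then there exists D ∈ ℕ such that for all d ≥ D the corner point d·e_i is a lonely point of dS ∩ ℤ^m with respect to L, if and only if 0 is a lonely point of the corner cone C_i with respect to L. -/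
/-- `stdVec m 0 = e_0 = 0` and `stdVec m i = e_i` (the `i`-th standard unit vector)
for `i ∈ {1, …, m}`. -/
def stdVec (m : ℕ) (i : Fin (m + 1)) : Fin m → ℤ :=
  fun j => if (j : ℕ) + 1 = (i : ℕ) then 1 else 0

/-- The `i`-th corner cone `C_i = [e_0 - e_i, e_1 - e_i, …, e_m - e_i]` of the
standard simplex. -/
def cornerCone (m : ℕ) (i : Fin (m + 1)) : Set (Fin m → ℤ) :=
  coneGen (fun k : Fin (m + 1) => stdVec m k - stdVec m i)

/-- The integer points of the `d`-dilated standard simplex `dS`. -/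
def simplexPts (m : ℕ) (d : ℕ) : Set (Fin m → ℤ) :=
  { v | (∀ j, 0 ≤ v j) ∧ ∑ j, v j ≤ (d : ℤ) }

lemma stdVec_nonneg {m : ℕ} (i : Fin (m+1)) (j : Fin m) : 0 ≤ stdVec m i j := by
  unfold stdVec; split <;> norm_num

lemma stdVec_le_one {m : ℕ} (i : Fin (m+1)) (j : Fin m) : stdVec m i j ≤ 1 := by
  unfold stdVec; split <;> norm_num

lemma sum_stdVec_nonneg {m : ℕ} (i : Fin (m+1)) : 0 ≤ ∑ j, stdVec m i j :=
  Finset.sum_nonneg fun j _ => stdVec_nonneg i j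

lemma sum_stdVec_le {m : ℕ} (i : Fin (m+1)) : ∑ j, stdVec m i j ≤ 1 := by
  induction i using Fin.cases with
  | zero => simp [stdVec]
  | succ i' =>
    have : ∀ j : Fin m, stdVec m i'.succ j = if j = i' then 1 else 0 := by
      intro j
      unfold stdVec
      rcases eq_or_ne j i' with h | h
      · simp [h]
      · have : (j:ℕ) + 1 ≠ (i'.succ : ℕ) := by
          simp only [Fin.val_succ]
          exact fun he => h (Fin.ext (by omega))
        simp [this, Fin.val_ne_of_ne h, h]
    simp [this]

lemma sum_mul_stdVec {m : ℕ} (β : Fin (m+1) → ℤ) (j : Fin m) :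
    ∑ k, β k * stdVec m k j = β j.succ := by
  rw [Finset.sum_eq_single j.succ]
  · simp [stdVec]
  · intro k _ hk
    have h : ¬ ((j:ℕ) + 1 = (k : ℕ)) := by
      intro he
      exact hk (Fin.ext (by simpa using he.symm))
    simp [stdVec, h]
  · simp

lemma cone_point {m : ℕ} (i : Fin (m+1)) (β : Fin (m+1) → ℕ) (j : Fin m) :
    (∑ k, (β k : ℤ) • (fun k : Fin (m + 1) => stdVec m k - stdVec m i) k) j
      = (β j.succ : ℤ) - (∑ k, (β k : ℤ)) * stdVec m i j := by
  simp only [Finset.sum_apply, Pi.smul_apply, Pi.sub_apply, smul_eq_mul, mul_sub]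
  rw [Finset.sum_sub_distrib, sum_mul_stdVec, ← Finset.sum_mul]

lemma memA {m : ℕ} (i : Fin (m+1)) (d : ℕ) (w : Fin m → ℤ) (hw : w ∈ simplexPts m d) :
    w - (d : ℤ) • stdVec m i ∈ cornerCone m i := by
  obtain ⟨h1, h2⟩ := hw
  refine ⟨Fin.cons ((d:ℤ) - ∑ j, w j).toNat (fun j => (w j).toNat), ?_⟩
  have hsum : ∑ k, ((Fin.cons ((d:ℤ) - ∑ j, w j).toNat (fun j => (w j).toNat) :
      Fin (m+1) → ℕ) k : ℤ) = (d : ℤ) := by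
    rw [Fin.sum_univ_succ]
    simp only [Fin.cons_zero, Fin.cons_succ]
    rw [Int.toNat_of_nonneg (by linarith)]
    have : ∀ j : Fin m, (((w j).toNat : ℤ)) = w j := fun j => Int.toNat_of_nonneg (h1 j)
    rw [Finset.sum_congr rfl fun j _ => this j]
    ring
  funext j
  rw [cone_point, hsum]
  simp only [Fin.cons_succ, Pi.sub_apply, Pi.smul_apply, smul_eq_mul]
  rw [Int.toNat_of_nonneg (h1 j)]

lemma memB {m : ℕ} (i : Fin (m+1)) (v : Fin m → ℤ) (hv : v ∈ cornerCone m i) :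
    ∃ N : ℕ, ∀ d : ℕ, N ≤ d → v + (d : ℤ) • stdVec m i ∈ simplexPts m d := by
  obtain ⟨β, hβ⟩ := hv
  refine ⟨∑ k, β k, fun d hd => ?_⟩
  have hNd : ((∑ k, β k : ℕ) : ℤ) ≤ (d : ℤ) := by exact_mod_cast hd
  have hN : (∑ k, (β k : ℤ)) = ((∑ k, β k : ℕ) : ℤ) := by push_cast; ring
  constructor
  · intro j
    have := cone_point i β j
    rw [← hβ] at this
    simp only [Pi.add_apply, Pi.smul_apply, smul_eq_mul, this, hN]
    have h0 : 0 ≤ stdVec m i j := stdVec_nonneg i j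
    have h1 : (0:ℤ) ≤ (β j.succ : ℤ) := Int.natCast_nonneg _
    nlinarith
  · have hval : ∀ j, v j = (β j.succ : ℤ) - ((∑ k, β k : ℕ) : ℤ) * stdVec m i j := by
      intro j
      have := cone_point i β j
      rw [← hβ] at this
      rw [this, hN]
    have : ∑ j, (v + (d:ℤ) • stdVec m i) j
        = ∑ j : Fin m, (β j.succ : ℤ) + ((d:ℤ) - ((∑ k, β k : ℕ) : ℤ)) * ∑ j, stdVec m i j := by
      simp only [Pi.add_apply, Pi.smul_apply, smul_eq_mul]
      rw [Finset.sum_add_distrib, Finset.sum_congr rfl fun j _ => hval j,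
        Finset.sum_sub_distrib, ← Finset.mul_sum, ← Finset.mul_sum]
      ring
    rw [this]
    have hT : ∑ j : Fin m, (β j.succ : ℤ) ≤ ((∑ k, β k : ℕ) : ℤ) := by
      have := Fin.sum_univ_succ (f := fun k => (β k : ℤ))
      rw [← hN, this]
      have : (0:ℤ) ≤ (β 0 : ℤ) := Int.natCast_nonneg _
      linarith
    have hs0 : 0 ≤ ∑ j, stdVec m i j := sum_stdVec_nonneg i
    have hs1 : ∑ j, stdVec m i j ≤ 1 := sum_stdVec_le i
    nlinarith

theorem stmt_6 {m : ℕ} (L : AddSubgroup (Fin m → ℤ)) (i : Fin (m + 1)) :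
    (∃ D : ℕ, ∀ d : ℕ, D ≤ d → IsLonely L (simplexPts m d) ((d : ℤ) • stdVec m i)) ↔
      IsLonely L (cornerCone m i) 0 := by
  constructor
  · rintro ⟨D, hD⟩
    refine ⟨⟨0, by simp⟩, ?_⟩
    intro v hv hv0 hvL
    obtain ⟨N, hN⟩ := memB i v hv
    set d := max D N with hd
    have hmem := hN d (le_max_right _ _)
    have hlone := hD d (le_max_left _ _)
    refine hlone.2 (v + (d:ℤ) • stdVec m i) hmem ?_ ?_
    · intro he
      apply hv0
      have : v + (d:ℤ) • stdVec m i - (d:ℤ) • stdVec m i = (d:ℤ) • stdVec m i - (d:ℤ) • stdVec m i := by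
        rw [he]
      simpa using this
    · simpa using (by simpa using hvL : v - 0 ∈ L)
  · rintro ⟨-, hlone⟩
    refine ⟨0, fun d _ => ⟨⟨fun j => ?_, ?_⟩, ?_⟩⟩
    · simp only [Pi.smul_apply, smul_eq_mul]
      exact mul_nonneg (Int.natCast_nonneg d) (stdVec_nonneg i j)
    · have : ∑ j, ((d:ℤ) • stdVec m i) j = (d:ℤ) * ∑ j, stdVec m i j := by
        simp only [Pi.smul_apply, smul_eq_mul]
        rw [Finset.mul_sum]
      rw [this]
      have := sum_stdVec_le i
      have hd0 : (0:ℤ) ≤ (d:ℤ) := Int.natCast_nonneg d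
      nlinarith
    · intro w hw hne hL
      refine hlone (w - (d:ℤ) • stdVec m i) (memA i d w hw) ?_ (by simpa using hL)
      intro he
      exact hne (sub_eq_zero.mp he)
end

section
/- Let L ⊆ ℤ^m be a lattice, let d ∈ ℕ, and let i ∈ {1, …, m}. If v ∈ ℤ^m is a lonely point of the corner cone C_i with respect to L and all coordinates of v + d·e_i are nonnegative, then v + d·e_i belongs to dS ∩ ℤ^m and is a lonely point of dS ∩ ℤ^m with respect to L. -/
lemma stdVec_apply {m : ℕ} (k : Fin (m+1)) (j : Fin m) :
    stdVec m k j = if k = j.succ then 1 else 0 := by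
  simp only [stdVec, Fin.ext_iff, Fin.val_succ]
  exact if_congr ⟨fun h => h.symm, fun h => h.symm⟩ rfl rfl

lemma stdVec_succ_apply {m : ℕ} (i j : Fin m) :
    stdVec m i.succ j = if j = i then 1 else 0 := by
  rw [stdVec_apply]
  exact if_congr (by rw [Fin.succ_inj, eq_comm]) rfl rfl

lemma sum_stdVec_succ {m : ℕ} (i : Fin m) :
    ∑ j, stdVec m i.succ j = 1 := by
  simp [stdVec_succ_apply]

lemma cone_eval {m : ℕ} (i : Fin m) (β : Fin (m+1) → ℕ) (j : Fin m) :
    (∑ k, (β k : ℤ) • (stdVec m k - stdVec m i.succ)) j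
      = (β j.succ : ℤ) - (if j = i then ∑ k, (β k : ℤ) else 0) := by
  rw [Finset.sum_apply]
  have h : ∀ k : Fin (m+1), ((β k : ℤ) • (stdVec m k - stdVec m i.succ)) j
      = (if k = j.succ then (β k : ℤ) else 0) - (if j = i then (β k : ℤ) else 0) := by
    intro k
    simp only [Pi.smul_apply, Pi.sub_apply, smul_eq_mul, mul_sub, stdVec_apply,
      stdVec_succ_apply, mul_ite, mul_one, mul_zero]
    rw [show (if i.succ = j.succ then (β k:ℤ) else 0) = (if j = i then (β k:ℤ) else 0) from
      if_congr (by rw [Fin.succ_inj, eq_comm]) rfl rfl]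
  simp only [h]
  rw [Finset.sum_sub_distrib, Finset.sum_ite_eq' Finset.univ j.succ (fun k => (β k : ℤ))]
  by_cases h2 : j = i <;> simp [h2]

lemma mem_cornerCone_iff {m : ℕ} (i : Fin m) (v : Fin m → ℤ) :
    v ∈ cornerCone m i.succ ↔ (∀ j, j ≠ i → 0 ≤ v j) ∧ ∑ j, v j ≤ 0 := by
  constructor
  · rintro ⟨β, rfl⟩
    constructor
    · intro j hj
      rw [cone_eval, if_neg hj]
      simp
    · have : ∑ j, (∑ k, (β k : ℤ) • (stdVec m k - stdVec m i.succ)) j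
          = (∑ j : Fin m, (β j.succ : ℤ)) - (∑ k, (β k : ℤ)) := by
        simp only [cone_eval]
        rw [Finset.sum_sub_distrib]
        congr 1
        rw [Finset.sum_ite_eq' Finset.univ i]
        simp
      rw [this, Fin.sum_univ_succ (f := fun k => (β k : ℤ))]
      simp
  · rintro ⟨h1, h2⟩
    set g : Fin m → ℕ := fun l => if l = i then 0 else (v l).toNat with hg
    refine ⟨Fin.cases (-∑ j, v j).toNat g, ?_⟩
    funext j
    rw [cone_eval]
    rw [Fin.sum_univ_succ (f := fun k => ((Fin.cases (-∑ j, v j).toNat g k : ℕ) : ℤ))]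
    simp only [Fin.cases_zero, Fin.cases_succ]
    have hgsum : ∑ l, (g l : ℤ) = ∑ l, (if l = i then 0 else v l) := by
      refine Finset.sum_congr rfl fun l _ => ?_
      by_cases hl : l = i
      · simp [hg, hl]
      · simp [hg, hl, Int.toNat_of_nonneg (h1 l hl)]
    by_cases hj : j = i
    · subst hj
      rw [if_pos rfl]
      have hsplit : (∑ l : Fin m, if l = j then (0:ℤ) else v l) = (∑ l, v l) - v j := by
        have h' : ∀ l, (if l = j then (0:ℤ) else v l) = v l - (if l = j then v l else 0) := by
          intro l; by_cases hl : l = j <;> simp [hl]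
        simp only [h']
        rw [Finset.sum_sub_distrib, Finset.sum_ite_eq' Finset.univ j v]
        simp
      have hgj : g j = 0 := by simp [hg]
      rw [hgj, hgsum, hsplit, Int.toNat_of_nonneg (by linarith)]
      push_cast
      ring
    · rw [if_neg hj]
      have hgj : g j = (v j).toNat := by simp [hg, hj]
      rw [hgj, Int.toNat_of_nonneg (h1 j hj)]
      ring

theorem stmt_7 {m : ℕ} (L : AddSubgroup (Fin m → ℤ)) (d : ℕ) (i : Fin m)
    (v : Fin m → ℤ) (hv : IsLonely L (cornerCone m i.succ) v)
    (hnn : ∀ j, 0 ≤ (v + (d : ℤ) • stdVec m i.succ) j) :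
    (v + (d : ℤ) • stdVec m i.succ) ∈ simplexPts m d ∧
      IsLonely L (simplexPts m d) (v + (d : ℤ) • stdVec m i.succ) := by
  obtain ⟨hvC, hlon⟩ := hv
  have hvC' := (mem_cornerCone_iff i v).mp hvC
  have hmem : (v + (d : ℤ) • stdVec m i.succ) ∈ simplexPts m d := by
    refine ⟨hnn, ?_⟩
    simp only [Pi.add_apply, Pi.smul_apply, smul_eq_mul]
    rw [Finset.sum_add_distrib, ← Finset.mul_sum, sum_stdVec_succ]
    have := hvC'.2
    linarith
  refine ⟨hmem, hmem, ?_⟩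
  intro w hw hne hL
  have hwC : w - (d : ℤ) • stdVec m i.succ ∈ cornerCone m i.succ := by
    rw [mem_cornerCone_iff]
    constructor
    · intro j hj
      simp only [Pi.sub_apply, Pi.smul_apply, smul_eq_mul, stdVec_succ_apply, if_neg hj,
        mul_zero, sub_zero]
      exact hw.1 j
    · simp only [Pi.sub_apply, Pi.smul_apply, smul_eq_mul]
      rw [Finset.sum_sub_distrib, ← Finset.mul_sum, sum_stdVec_succ]
      have := hw.2
      linarith
  have hne' : w - (d : ℤ) • stdVec m i.succ ≠ v := by
    intro h
    apply hne
    rw [← h]; ring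
  have heq : w - (d : ℤ) • stdVec m i.succ - v = w - (v + (d : ℤ) • stdVec m i.succ) := by ring
  exact hlon _ hwC hne' (heq ▸ hL)
end

section
/- Let k ∈ {1, …, m}, let r_1, …, r_k ∈ {1, …, m} be pairwise distinct indices, and let v_1, …, v_k ∈ ℝ^m be such that v_i is r_i-visible for each i ∈ {1, …, k}. Set v := v_1 + ⋯ + v_k and suppose that the r_l-th coordinate of v is nonnegative for every l ∈ {1, …, k}. Then the r_l-th coordinate of v is zero for every l ∈ {1, …, k}, and for every j ∈ {1, …, m} ∖ {r_1, …, r_k} the j-th coordinate of v_i is zero for every i ∈ {1, …, k}. -/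
/-- A vector `v ∈ ℝ^m` is `i`-visible if all coordinates except possibly the `i`-th
are nonnegative and `-v i` is at least the sum of all other coordinates. -/
def VisibleAt {m : ℕ} (i : Fin m) (v : Fin m → ℝ) : Prop :=
  (∀ j, j ≠ i → 0 ≤ v j) ∧ ∑ j ∈ Finset.univ.erase i, v j ≤ -(v i)

theorem stmt_9 {m k : ℕ} (hk1 : 1 ≤ k) (hkm : k ≤ m)
    (r : Fin k → Fin m) (hr : Function.Injective r)
    (v : Fin k → (Fin m → ℝ)) (hvis : ∀ i : Fin k, VisibleAt (r i) (v i))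
    (hnn : ∀ l : Fin k, 0 ≤ (∑ i, v i) (r l)) :
    (∀ l : Fin k, (∑ i, v i) (r l) = 0) ∧
      (∀ j : Fin m, (∀ l : Fin k, r l ≠ j) → ∀ i : Fin k, v i j = 0) := by
  classical
  have happ : ∀ l : Fin k, (∑ i, v i) (r l) = ∑ i, v i (r l) := by
    intro l; simp
  have himg : ∀ i : Fin k, ∑ l ∈ Finset.univ.erase i, v i (r l)
      = ∑ j ∈ (Finset.univ.erase i).image r, v i j := by
    intro i
    exact (Finset.sum_image (fun a _ b _ h => hr h)).symm
  have hsub : ∀ i : Fin k, (Finset.univ.erase i).image r ⊆ Finset.univ.erase (r i) := by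
    intro i j hj
    simp only [Finset.mem_image, Finset.mem_erase, Finset.mem_univ, and_true] at hj ⊢
    obtain ⟨l, hl, rfl⟩ := hj
    exact fun h => hl (hr h)
  have hmono : ∀ i : Fin k,
      ∑ j ∈ (Finset.univ.erase i).image r, v i j ≤ ∑ j ∈ Finset.univ.erase (r i), v i j := by
    intro i
    refine Finset.sum_le_sum_of_subset_of_nonneg (hsub i) ?_
    intro j hj _
    exact (hvis i).1 j (Finset.mem_erase.mp hj).1
  have hsplit : ∀ i : Fin k,
      (∑ l, v i (r l)) = v i (r i) + ∑ l ∈ Finset.univ.erase i, v i (r l) := by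
    intro i
    exact (Finset.add_sum_erase _ _ (Finset.mem_univ i)).symm
  have hTle : ∀ i : Fin k, (∑ l, v i (r l)) ≤ 0 := by
    intro i
    rw [hsplit i, himg i]
    have := (hmono i).trans (hvis i).2
    linarith
  have hS : (∑ l, (∑ i, v i) (r l)) = ∑ i, ∑ l, v i (r l) := by
    simp only [happ]
    exact Finset.sum_comm
  have hSle : (∑ l, (∑ i, v i) (r l)) ≤ 0 := by
    rw [hS]
    exact Finset.sum_nonpos fun i _ => hTle i
  have hS0 : (∑ l, (∑ i, v i) (r l)) = 0 :=
    le_antisymm hSle (Finset.sum_nonneg fun l _ => hnn l)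
  have hfirst : ∀ l : Fin k, (∑ i, v i) (r l) = 0 := by
    intro l
    have := (Finset.sum_eq_zero_iff_of_nonneg (fun l _ => hnn l)).mp hS0
    exact this l (Finset.mem_univ l)
  refine ⟨hfirst, ?_⟩
  have hT0 : ∀ i : Fin k, (∑ l, v i (r l)) = 0 := by
    have h : (∑ i, ∑ l, v i (r l)) = 0 := by rw [← hS, hS0]
    intro i
    have := (Finset.sum_eq_zero_iff_of_nonpos (fun i _ => hTle i)).mp h
    exact this i (Finset.mem_univ i)
  intro j hj i
  -- tightness: the slack sum over erase (r i) \ image is zero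
  have heq : ∑ x ∈ Finset.univ.erase (r i), v i x
      = ∑ x ∈ (Finset.univ.erase i).image r, v i x := by
    have h1 : v i (r i) + ∑ x ∈ (Finset.univ.erase i).image r, v i x = 0 := by
      rw [← himg i, ← hsplit i]; exact hT0 i
    have h2 := (hvis i).2
    have h3 := hmono i
    linarith
  have hdiff : ∑ x ∈ Finset.univ.erase (r i) \ (Finset.univ.erase i).image r, v i x = 0 := by
    have := Finset.sum_sdiff (f := v i) (hsub i)
    linarith [heq]
  have hjmem : j ∈ Finset.univ.erase (r i) \ (Finset.univ.erase i).image r := by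
    simp only [Finset.mem_sdiff, Finset.mem_erase, Finset.mem_univ, and_true,
      Finset.mem_image, not_exists]
    exact ⟨Ne.symm (hj i), fun l hc => hj l hc.2⟩
  have hnonneg : ∀ x ∈ Finset.univ.erase (r i) \ (Finset.univ.erase i).image r, 0 ≤ v i x := by
    intro x hx
    exact (hvis i).1 x (Finset.mem_erase.mp (Finset.mem_sdiff.mp hx).1).1
  exact (Finset.sum_eq_zero_iff_of_nonneg hnonneg).mp hdiff j hjmem
end

section
/- Let m ≥ 2 and let v_1, …, v_m ∈ ℝ^m ∖ {0} be such that v_i is i-visible for each i ∈ {1, …, m}. Let V := span_ℝ(v_1, …, v_m). If no nonzero subspace of V decomposes into a direct sum of two nonzero coordinate-supported subspaces, then dim(V) = m − 1. -/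
def coordSubspace {m : ℕ} (I : Set (Fin m)) : Submodule ℝ (Fin m → ℝ) where
  carrier := { v | ∀ j ∉ I, v j = 0 }
  add_mem' := by
    intro a b ha hb j hj
    simp [Pi.add_apply, ha j hj, hb j hj]
  zero_mem' := by
    intro j hj
    rfl
  smul_mem' := by
    intro c a ha j hj
    simp [Pi.smul_apply, ha j hj]

def DecomposesCoord {m : ℕ} (W : Submodule ℝ (Fin m → ℝ)) : Prop :=
  ∃ I : Set (Fin m), I.Nonempty ∧ Iᶜ.Nonempty ∧
    W ⊓ coordSubspace I ≠ ⊥ ∧ W ⊓ coordSubspace Iᶜ ≠ ⊥ ∧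
    Disjoint (W ⊓ coordSubspace I) (W ⊓ coordSubspace Iᶜ) ∧
    W = (W ⊓ coordSubspace I) ⊔ (W ⊓ coordSubspace Iᶜ)

/-
By rank–nullity it suffices that the common orthogonal `N` of the `v i` is a line.
It is nonzero because `span v ≠ ℝ^m`, as `ℝ^m = R_{i} ⊕ R_{i}ᶜ` decomposes.

If `dim N ≥ 2`, some `z ≠ 0` in `N` has a vanishing coordinate, so `max z ≥ 0 ≥ min z` and
`max z ≠ min z`. Since `v i` is `i`-visible and `v i ⬝ᵥ z = 0`, if `z` is maximal at `i` then it is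
maximal on the whole support of `v i` (the terms of `∑_{k ≠ i} v i k (z i - z k) ≤ 0` are `≥ 0`);
likewise for the minimum. So the `v i` with `i` in the argmax `S` of `z` span a nonzero subspace of
`R_S`, those with `i` in the argmin span a nonzero subspace of `R_Sᶜ`, and their sum is a
decomposable subspace of `span v`.
-/

open Module Submodule Set

variable {m : ℕ}

lemma coordSubspace_empty : coordSubspace (∅ : Set (Fin m)) = ⊥ :=
  eq_bot_iff.2 fun _ hx => funext fun j => hx j (notMem_empty j)

lemma coordSubspace_ne_bot {I : Set (Fin m)} (hI : I.Nonempty) : coordSubspace I ≠ ⊥ := by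
  obtain ⟨i, hi⟩ := hI
  refine (Submodule.ne_bot_iff _).2 ⟨Pi.single i 1, fun j hj => ?_, by simp⟩
  exact Pi.single_eq_of_ne (ne_of_mem_of_not_mem hi hj).symm 1

lemma coordSubspace_mono {I J : Set (Fin m)} (h : I ⊆ J) : coordSubspace I ≤ coordSubspace J :=
  fun _ hx j hj => hx j (fun hI => hj (h hI))

lemma disjoint_coordSubspace_compl (I : Set (Fin m)) :
    Disjoint (coordSubspace I) (coordSubspace Iᶜ) := by
  refine (Submodule.disjoint_def).2 fun x hx hxc => funext fun j => ?_
  by_cases hj : j ∈ I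
  · exact hxc j (not_not_intro hj)
  · exact hx j hj

lemma coordSubspace_sup_compl (I : Set (Fin m)) : coordSubspace I ⊔ coordSubspace Iᶜ = ⊤ := by
  classical
  refine eq_top_iff.2 fun x _ => ?_
  rw [← I.indicator_self_add_compl x]
  exact Submodule.add_mem_sup (fun j hj => indicator_of_notMem hj x)
    (fun j hj => indicator_of_notMem hj x)

lemma decomposesCoord_sup {W₁ W₂ : Submodule ℝ (Fin m → ℝ)} {I : Set (Fin m)}
    (h₁ : W₁ ≤ coordSubspace I) (h₂ : W₂ ≤ coordSubspace Iᶜ) (hW₁ : W₁ ≠ ⊥) (hW₂ : W₂ ≠ ⊥) :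
    DecomposesCoord (W₁ ⊔ W₂) := by
  have nonempty_of_le {J : Set (Fin m)} {W : Submodule ℝ (Fin m → ℝ)} (hJ : W ≤ coordSubspace J)
      (hW : W ≠ ⊥) : J.Nonempty := by
    refine nonempty_iff_ne_empty.2 ?_
    rintro rfl
    exact hW (eq_bot_iff.2 (hJ.trans coordSubspace_empty.le))
  have hle₁ : W₁ ≤ (W₁ ⊔ W₂) ⊓ coordSubspace I := le_inf le_sup_left h₁
  have hle₂ : W₂ ≤ (W₁ ⊔ W₂) ⊓ coordSubspace Iᶜ := le_inf le_sup_right h₂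
  refine ⟨I, nonempty_of_le h₁ hW₁, nonempty_of_le h₂ hW₂, ne_bot_of_le_ne_bot hW₁ hle₁,
    ne_bot_of_le_ne_bot hW₂ hle₂, ?_, ?_⟩
  · exact (disjoint_coordSubspace_compl I).mono inf_le_right inf_le_right
  · exact le_antisymm (sup_le_sup hle₁ hle₂) (sup_le inf_le_left inf_le_left)

lemma decomposesCoord_top (hm : 2 ≤ m) : DecomposesCoord (⊤ : Submodule ℝ (Fin m → ℝ)) := by
  let I : Set (Fin m) := {⟨0, by omega⟩}
  have hIc : Iᶜ.Nonempty := ⟨⟨1, by omega⟩, by simp [I]⟩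
  rw [← coordSubspace_sup_compl I]
  exact decomposesCoord_sup le_rfl le_rfl (coordSubspace_ne_bot (singleton_nonempty _))
    (coordSubspace_ne_bot hIc)

lemma VisibleAt.apply_eq_of_dotProduct_eq_zero {i : Fin m} {v z : Fin m → ℝ} (hv : VisibleAt i v)
    (hz : v ⬝ᵥ z = 0) (hmax : ∀ j, z j ≤ z i) (hzi : 0 ≤ z i) {j : Fin m} (hj : v j ≠ 0) :
    z j = z i := by
  obtain ⟨hnonneg, hsum⟩ := hv
  rcases eq_or_ne j i with rfl | hji
  · rfl
  have hterm : ∀ k ∈ Finset.univ.erase i, 0 ≤ v k * (z i - z k) := fun k hk =>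
    mul_nonneg (hnonneg k (Finset.ne_of_mem_erase hk)) (sub_nonneg.2 (hmax k))
  have hexpand : ∑ k ∈ Finset.univ.erase i, v k * (z i - z k)
      = (∑ k ∈ Finset.univ.erase i, v k + v i) * z i - v ⬝ᵥ z := by
    simp only [dotProduct, mul_sub, Finset.sum_sub_distrib, ← Finset.sum_mul,
      ← Finset.add_sum_erase _ _ (Finset.mem_univ i)]
    ring
  have hle : ∑ k ∈ Finset.univ.erase i, v k * (z i - z k) ≤ 0 := by
    rw [hexpand, hz, sub_zero]
    exact mul_nonpos_of_nonpos_of_nonneg (by linarith) hzi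
  have hzero := (Finset.sum_eq_zero_iff_of_nonneg hterm).1
    (le_antisymm hle (Finset.sum_nonneg hterm)) j (Finset.mem_erase.2 ⟨hji, Finset.mem_univ j⟩)
  linarith [(mul_eq_zero.1 hzero).resolve_left hj]

lemma span_image_level_le_coordSubspace {v : Fin m → Fin m → ℝ} (hvis : ∀ i, VisibleAt i (v i))
    {z : Fin m → ℝ} (hz : ∀ i, v i ⬝ᵥ z = 0) {c : ℝ} (hc : 0 ≤ c) (hmax : ∀ j, z j ≤ c) :
    span ℝ (v '' {j | z j = c}) ≤ coordSubspace {j | z j = c} := by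
  refine span_le.2 ?_
  rintro _ ⟨i, hi, rfl⟩ j hj
  by_contra hvij
  exact hj (((hvis i).apply_eq_of_dotProduct_eq_zero (hz i) (hi ▸ hmax) (hi ▸ hc) hvij).trans hi)

lemma exists_decomposesCoord_le_span {v : Fin m → Fin m → ℝ} (hne : ∀ i, v i ≠ 0)
    (hvis : ∀ i, VisibleAt i (v i)) {z : Fin m → ℝ} (hz : ∀ i, v i ⬝ᵥ z = 0) (hz0 : z ≠ 0)
    {j₀ : Fin m} (hzj₀ : z j₀ = 0) :
    ∃ W ≤ span ℝ (range v), W ≠ ⊥ ∧ DecomposesCoord W := by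
  obtain ⟨imax, -, hmax⟩ := Finset.exists_max_image Finset.univ z ⟨j₀, Finset.mem_univ _⟩
  obtain ⟨imin, -, hmin⟩ := Finset.exists_min_image Finset.univ z ⟨j₀, Finset.mem_univ _⟩
  replace hmax : ∀ j, z j ≤ z imax := fun j => hmax j (Finset.mem_univ j)
  replace hmin : ∀ j, z imin ≤ z j := fun j => hmin j (Finset.mem_univ j)
  set S : Set (Fin m) := {j | z j = z imax}
  set T : Set (Fin m) := {j | z j = z imin}
  have hTS : T ⊆ Sᶜ := by
    intro j (hjT : z j = z imin) (hjS : z j = z imax)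
    refine hz0 (funext fun k => ?_)
    rw [Pi.zero_apply]
    linarith [hmax k, hmin k, hmax j₀, hmin j₀]
  have hS : span ℝ (v '' S) ≤ coordSubspace S :=
    span_image_level_le_coordSubspace hvis hz (hzj₀ ▸ hmax j₀) hmax
  have hT : span ℝ (v '' T) ≤ coordSubspace T := by
    have hzneg : ∀ i, v i ⬝ᵥ -z = 0 := fun i => by rw [dotProduct_neg, hz i, neg_zero]
    have := span_image_level_le_coordSubspace hvis hzneg (c := -z imin)
      (by linarith [hmin j₀]) (fun j => neg_le_neg (hmin j))
    simpa only [Pi.neg_apply, neg_inj] using this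
  have span_ne_bot {i : Fin m} {J : Set (Fin m)} (hi : i ∈ J) : span ℝ (v '' J) ≠ ⊥ :=
    fun h => hne i (span_eq_bot.1 h _ ⟨i, hi, rfl⟩)
  have hS0 : span ℝ (v '' S) ≠ ⊥ := span_ne_bot (i := imax) rfl
  have hT0 : span ℝ (v '' T) ≠ ⊥ := span_ne_bot (i := imin) rfl
  refine ⟨span ℝ (v '' S) ⊔ span ℝ (v '' T),
    sup_le (span_mono (image_subset_range v S)) (span_mono (image_subset_range v T)),
    ne_bot_of_le_ne_bot hS0 le_sup_left, ?_⟩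
  exact decomposesCoord_sup hS (hT.trans (coordSubspace_mono hTS)) hS0 hT0

lemma finrank_span_range_add_finrank_ker {K ι n : Type*} [Field K] [Fintype ι] [Fintype n]
    (v : ι → n → K) :
    finrank K (span K (range v)) + finrank K (LinearMap.ker (Matrix.of v).mulVecLin) =
      Fintype.card n := by
  rw [← Module.finrank_fintype_fun_eq_card (R := K),
    ← LinearMap.finrank_range_add_finrank_ker (Matrix.of v).mulVecLin, ← Matrix.rank,
    Matrix.rank_eq_finrank_span_row]
  rfl

lemma mem_ker_mulVecLin_of {K ι n : Type*} [Field K] [Fintype n] {v : ι → n → K} {z : n → K} :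
    z ∈ LinearMap.ker (Matrix.of v).mulVecLin ↔ ∀ i, v i ⬝ᵥ z = 0 := by
  simp [funext_iff, Matrix.mulVec]

lemma Submodule.exists_mem_ne_zero_apply_eq_zero {K E : Type*} [Field K] [AddCommGroup E]
    [Module K E] {W : Submodule K E} [FiniteDimensional K W] (hW : 1 < finrank K W)
    (φ : E →ₗ[K] K) : ∃ x ∈ W, x ≠ 0 ∧ φ x = 0 := by
  by_contra! h
  have hinj : Function.Injective (φ ∘ₗ W.subtype) := by
    refine (injective_iff_map_eq_zero _).2 fun x hx => ?_
    by_contra hx0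
    exact h x x.2 (by simpa using hx0) hx
  have := LinearMap.finrank_le_finrank_of_injective hinj
  rw [Module.finrank_self] at this
  omega

theorem stmt_10 {m : ℕ} (hm : 2 ≤ m) (v : Fin m → (Fin m → ℝ))
    (hne : ∀ i, v i ≠ 0) (hvis : ∀ i, VisibleAt i (v i))
    (hnd : ∀ W : Submodule ℝ (Fin m → ℝ),
      W ≤ Submodule.span ℝ (Set.range v) → W ≠ ⊥ → ¬ DecomposesCoord W) :
    Module.finrank ℝ ↥(Submodule.span ℝ (Set.range v)) = m - 1 := by
  set V := span ℝ (range v)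
  set N := LinearMap.ker (Matrix.of v).mulVecLin
  have hrank : finrank ℝ V + finrank ℝ N = m := by
    simpa using finrank_span_range_add_finrank_ker v
  have i₀ : Fin m := ⟨0, by omega⟩
  have hV : V ≠ ⊤ := by
    intro htop
    have hVbot : V ≠ ⊥ := fun h => hne i₀ (span_eq_bot.1 h _ ⟨i₀, rfl⟩)
    exact hnd V le_rfl hVbot (htop ▸ decomposesCoord_top hm)
  have hN : finrank ℝ N ≤ 1 := by
    by_contra! hN
    obtain ⟨z, hzN, hz0, hzi₀⟩ := N.exists_mem_ne_zero_apply_eq_zero hN (LinearMap.proj i₀)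
    obtain ⟨W, hWV, hW0, hWdec⟩ :=
      exists_decomposesCoord_le_span hne hvis (mem_ker_mulVecLin_of.1 hzN) hz0 hzi₀
    exact hnd W hWV hW0 hWdec
  have hVlt : finrank ℝ V < m := by simpa using Submodule.finrank_lt hV
  omega
end

section
/- Let m ≥ 3 and let L ⊆ ℤ^m be a lattice of dimension less than m − 1 such that no nonzero subspace of the ℝ-vector space spanned by L decomposes into a direct sum of two nonzero coordinate-supported subspaces. Then there exists an index i ∈ {1, …, m} such that L ∩ C_i = {0}, where C_i is the i-th corner cone of the standard simplex. -/
/-- The `ℝ`-vector space spanned by a lattice `L ⊆ ℤ^m`. -/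
def latticeSpan {m : ℕ} (L : AddSubgroup (Fin m → ℤ)) : Submodule ℝ (Fin m → ℝ) :=
  Submodule.span ℝ ((fun v : Fin m → ℤ => (fun j => (v j : ℝ))) '' (L : Set (Fin m → ℤ)))


lemma cone_mem_props {m : ℕ} {i : Fin m} {w : Fin m → ℤ}
    (hw : w ∈ cornerCone m i.succ) :
    (∀ j, j ≠ i → 0 ≤ w j) ∧ (∑ j, w j ≤ 0) := by
  obtain ⟨β, hβ⟩ := hw
  have hval : ∀ j : Fin m, w j =
      (β j.succ : ℤ) - (if j = i then (∑ k, (β k : ℤ)) else 0) := by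
    intro j
    rw [hβ]
    rw [Finset.sum_apply]
    have h1 : ∀ k : Fin (m+1),
        ((β k : ℤ) • (stdVec m k - stdVec m i.succ)) j
          = (if k = j.succ then (β k : ℤ) else 0)
            - (if j = i then (β k : ℤ) else 0) := by
      intro k
      have hs1 : stdVec m k j = if k = j.succ then 1 else 0 := by
        unfold stdVec
        congr 1
        simp only [eq_iff_iff, Fin.ext_iff, Fin.val_succ]
        omega
      have hs2 : stdVec m i.succ j = if j = i then 1 else 0 := by
        unfold stdVec
        congr 1
        simp only [eq_iff_iff, Fin.ext_iff, Fin.val_succ]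
        omega
      simp only [Pi.smul_apply, Pi.sub_apply, hs1, hs2, smul_eq_mul]
      split <;> split <;> ring
    rw [Finset.sum_congr rfl (fun k _ => h1 k), Finset.sum_sub_distrib]
    congr 1
    · simp
    · split <;> simp
  constructor
  · intro j hj
    rw [hval j, if_neg hj]
    simp
  · have : ∑ j, w j = ∑ j : Fin m, ((β j.succ : ℤ)
        - (if j = i then (∑ k, (β k : ℤ)) else 0)) :=
      Finset.sum_congr rfl (fun j _ => hval j)
    rw [this, Finset.sum_sub_distrib]
    have h2 : ∑ j : Fin m, (if j = i then (∑ k, (β k : ℤ)) else 0)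
        = ∑ k, (β k : ℤ) := by simp
    have h3 : ∑ j : Fin m, (β j.succ : ℤ) = (∑ k, (β k : ℤ)) - (β 0 : ℤ) := by
      rw [Fin.sum_univ_succ (fun k => (β k : ℤ))]; ring
    rw [h2, h3]
    have : (0:ℤ) ≤ (β 0 : ℤ) := Int.ofNat_nonneg _
    omega

/-- A set is closed if the support of every row indexed in the set lies in the set. -/
def RowClosed {m : ℕ} (v : Fin m → Fin m → ℤ) (S : Set (Fin m)) : Prop :=
  ∀ k ∈ S, ∀ j, v k j ≠ 0 → j ∈ S

lemma rowClosed_inter {m : ℕ} {v : Fin m → Fin m → ℤ} {S T : Set (Fin m)}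
    (hS : RowClosed v S) (hT : RowClosed v T) : RowClosed v (S ∩ T) :=
  fun k hk j hj => ⟨hS k hk.1 j hj, hT k hk.2 j hj⟩

lemma aux_half {m : ℕ} (v : Fin m → Fin m → ℤ)
    (hnn : ∀ i j, j ≠ i → 0 ≤ v i j) (hsum : ∀ i, ∑ j, v i j ≤ 0)
    (x : Fin m → ℝ) (hx : ∀ i, ∑ j, (v i j : ℝ) * x j = 0) (c : ℝ)
    (hc : 0 < c) (hub : ∀ j, x j ≤ c) :
    RowClosed v {k | x k = c} := by
  intro k hk j hvj
  have hk' : x k = c := hk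
  set f : Fin m → ℝ := fun j' => (v k j' : ℝ) * (c - x j') with hf
  have hfnn : ∀ j' ∈ Finset.univ, 0 ≤ f j' := by
    intro j' _
    by_cases hjk : j' = k
    · subst hjk; simp [hf, hk']
    · exact mul_nonneg (by exact_mod_cast hnn k j' hjk) (by linarith [hub j'])
  have hfsum : ∑ j', f j' = c * (∑ j', (v k j' : ℝ)) := by
    simp only [hf, mul_sub]
    rw [Finset.sum_sub_distrib, hx k, Finset.mul_sum]
    simp [mul_comm]
  have hsumle : ∑ j', f j' ≤ 0 := by
    rw [hfsum]
    have : (∑ j', (v k j' : ℝ)) ≤ 0 := by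
      have := hsum k
      exact_mod_cast this
    nlinarith
  have hzero : ∑ j', f j' = 0 :=
    le_antisymm hsumle (Finset.sum_nonneg hfnn)
  have hall := (Finset.sum_eq_zero_iff_of_nonneg hfnn).mp hzero
  have hfj : f j = 0 := hall j (Finset.mem_univ j)
  have hvj' : (v k j : ℝ) ≠ 0 := by exact_mod_cast hvj
  have : c - x j = 0 := by
    rcases mul_eq_zero.mp hfj with h | h
    · exact absurd h hvj'
    · exact h
  have : x j = c := by linarith
  exact this

lemma aux_const_closed {m : ℕ} (hm : 0 < m) (v : Fin m → Fin m → ℤ)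
    (hnn : ∀ i j, j ≠ i → 0 ≤ v i j) (hsum : ∀ i, ∑ j, v i j ≤ 0)
    (x : Fin m → ℝ) (hx : ∀ i, ∑ j, (v i j : ℝ) * x j = 0) (hxne : x ≠ 0) :
    ∃ (S : Set (Fin m)) (c : ℝ), S.Nonempty ∧ RowClosed v S ∧ c ≠ 0 ∧
      ∀ k ∈ S, x k = c := by
  have hne : (Finset.univ : Finset (Fin m)).Nonempty := by
    simpa [Finset.univ_nonempty_iff] using Fin.pos_iff_nonempty.mp hm
  obtain ⟨j0, hj0⟩ := Function.ne_iff.mp hxne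
  by_cases hpos : 0 < Finset.univ.sup' hne x
  · set c := Finset.univ.sup' hne x with hcdef
    obtain ⟨k0, _, hk0⟩ := Finset.exists_mem_eq_sup' hne x
    refine ⟨{k | x k = c}, c, ⟨k0, hk0.symm⟩, ?_, ne_of_gt hpos, fun k hk => hk⟩
    exact aux_half v hnn hsum x hx c hpos (fun j => Finset.le_sup' x (Finset.mem_univ j))
  · set y : Fin m → ℝ := fun j => -x j with hy
    have hxy : ∀ i, ∑ j, (v i j : ℝ) * y j = 0 := by
      intro i
      simp only [hy, mul_neg]
      rw [Finset.sum_neg_distrib, hx i, neg_zero]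
    set c := Finset.univ.sup' hne y with hcdef
    have hxj0 : x j0 < 0 := by
      have h1 : x j0 ≤ Finset.univ.sup' hne x := Finset.le_sup' x (Finset.mem_univ j0)
      have h2 : Finset.univ.sup' hne x ≤ 0 := le_of_not_gt hpos
      rcases lt_or_eq_of_le (le_trans h1 h2) with h | h
      · exact h
      · exact absurd h (by simpa using hj0)
    have hcpos : 0 < c := by
      have : y j0 ≤ c := Finset.le_sup' y (Finset.mem_univ j0)
      have : 0 < y j0 := by simp [hy]; linarith
      linarith [Finset.le_sup' y (Finset.mem_univ j0)]
    obtain ⟨k0, _, hk0⟩ := Finset.exists_mem_eq_sup' hne y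
    have hclosed : RowClosed v {k | y k = c} :=
      aux_half v hnn hsum y hxy c hcpos (fun j => Finset.le_sup' y (Finset.mem_univ j))
    refine ⟨{k | y k = c}, -c, ⟨k0, hk0.symm⟩, hclosed, by linarith, ?_⟩
    intro k hk
    have : y k = c := hk
    simp only [hy] at this
    linarith

lemma mem_coordSubspace {m : ℕ} {I : Set (Fin m)} {x : Fin m → ℝ} :
    x ∈ coordSubspace I ↔ ∀ j ∉ I, x j = 0 := Iff.rfl

theorem stmt_11 {m : ℕ} (hm : 3 ≤ m) (L : AddSubgroup (Fin m → ℤ))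
    (hdim : Module.finrank ℝ ↥(latticeSpan L) < m - 1)
    (hnd : ∀ W : Submodule ℝ (Fin m → ℝ),
      W ≤ latticeSpan L → W ≠ ⊥ → ¬ DecomposesCoord W) :
    ∃ i : Fin m, (L : Set (Fin m → ℤ)) ∩ cornerCone m i.succ = {0} := by
  by_contra hcon
  push_neg at hcon
  have hex : ∀ i : Fin m, ∃ w : Fin m → ℤ,
      w ∈ L ∧ w ∈ cornerCone m i.succ ∧ w ≠ 0 := by
    intro i
    by_contra hno
    push_neg at hno
    apply hcon i
    apply Set.eq_singleton_iff_unique_mem.mpr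
    refine ⟨⟨L.zero_mem, ⟨fun _ => 0, by simp⟩⟩, ?_⟩
    rintro w ⟨hw1, hw2⟩
    exact hno w hw1 hw2
  choose v hvL hvC hvne using hex
  have hnn : ∀ i j, j ≠ i → 0 ≤ v i j := fun i j hj => (cone_mem_props (hvC i)).1 j hj
  have hsum : ∀ i, ∑ j, v i j ≤ 0 := fun i => (cone_mem_props (hvC i)).2
  have hdiag : ∀ i, v i i < 0 := by
    intro i
    by_contra hge
    push_neg at hge
    have hall : ∀ j, 0 ≤ v i j := by
      intro j
      by_cases h : j = i
      · subst h; exact hge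
      · exact hnn i j h
    have hz0 : ∑ j, v i j = 0 :=
      le_antisymm (hsum i) (Finset.sum_nonneg fun j _ => hall j)
    have hz := (Finset.sum_eq_zero_iff_of_nonneg (fun j _ => hall j)).mp hz0
    exact hvne i (by funext j; exact hz j (Finset.mem_univ j))
  set r : Fin m → (Fin m → ℝ) := fun i j => (v i j : ℝ) with hr
  have hrL : ∀ i, r i ∈ latticeSpan L := fun i =>
    Submodule.subset_span ⟨v i, hvL i, rfl⟩
  have hrne : ∀ k, r k ≠ 0 := by
    intro k h0
    have h1 := congrFun h0 k
    have h2 : (v k k : ℝ) < 0 := by exact_mod_cast hdiag k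
    simp only [hr, Pi.zero_apply] at h1
    linarith
  by_cases hcase : ∃ S T : Set (Fin m), S.Nonempty ∧ T.Nonempty ∧ Disjoint S T ∧
      RowClosed v S ∧ RowClosed v T
  · -- decomposable case
    obtain ⟨S, T, hSne, hTne, hdisj, hSc, hTc⟩ := hcase
    obtain ⟨kS, hkS⟩ := hSne
    obtain ⟨kT, hkT⟩ := hTne
    set W : Submodule ℝ (Fin m → ℝ) := Submodule.span ℝ (r '' (S ∪ T)) with hW
    have hWle : W ≤ latticeSpan L := by
      rw [hW]
      apply Submodule.span_le.mpr
      rintro w ⟨k, _, rfl⟩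
      exact hrL k
    have hSsub : ∀ k ∈ S, r k ∈ coordSubspace S := by
      intro k hk
      rw [mem_coordSubspace]
      intro j hj
      by_contra hne0
      have hvne0 : v k j ≠ 0 := by intro h; exact hne0 (by simp [hr, h])
      exact hj (hSc k hk j hvne0)
    have hTsub : ∀ k ∈ T, r k ∈ coordSubspace Sᶜ := by
      intro k hk
      rw [mem_coordSubspace]
      intro j hj
      by_contra hne0
      have hvne0 : v k j ≠ 0 := by intro h; exact hne0 (by simp [hr, h])
      have hjT : j ∈ T := hTc k hk j hvne0
      have hjS : j ∈ S := Set.not_notMem.mp hj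
      exact Set.disjoint_left.mp hdisj hjS hjT
    have hrkSW : r kS ∈ W := Submodule.subset_span ⟨kS, Or.inl hkS, rfl⟩
    have hrkTW : r kT ∈ W := Submodule.subset_span ⟨kT, Or.inr hkT, rfl⟩
    have hWne : W ≠ ⊥ := by
      intro hb
      rw [hb, Submodule.mem_bot] at hrkSW
      exact hrne kS hrkSW
    apply hnd W hWle hWne
    refine ⟨S, ⟨kS, hkS⟩, ⟨kT, fun h => Set.disjoint_left.mp hdisj h hkT⟩, ?_, ?_, ?_, ?_⟩
    · intro hb
      have : r kS ∈ W ⊓ coordSubspace S :=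
        Submodule.mem_inf.mpr ⟨hrkSW, hSsub kS hkS⟩
      rw [hb, Submodule.mem_bot] at this
      exact hrne kS this
    · intro hb
      have : r kT ∈ W ⊓ coordSubspace Sᶜ :=
        Submodule.mem_inf.mpr ⟨hrkTW, hTsub kT hkT⟩
      rw [hb, Submodule.mem_bot] at this
      exact hrne kT this
    · rw [disjoint_iff, eq_bot_iff]
      intro x hx
      rw [Submodule.mem_inf, Submodule.mem_inf, Submodule.mem_inf] at hx
      obtain ⟨⟨_, hx1⟩, _, hx2⟩ := hx
      rw [Submodule.mem_bot]
      funext j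
      by_cases hjS : j ∈ S
      · exact mem_coordSubspace.mp hx2 j (by simpa using hjS)
      · exact mem_coordSubspace.mp hx1 j hjS
    · apply le_antisymm
      · rw [hW]
        apply Submodule.span_le.mpr
        rintro w ⟨k, hk | hk, rfl⟩
        · exact le_sup_left (α := Submodule ℝ (Fin m → ℝ))
            (Submodule.mem_inf.mpr ⟨Submodule.subset_span ⟨k, Or.inl hk, rfl⟩, hSsub k hk⟩)
        · exact le_sup_right (α := Submodule ℝ (Fin m → ℝ))
            (Submodule.mem_inf.mpr ⟨Submodule.subset_span ⟨k, Or.inr hk, rfl⟩, hTsub k hk⟩)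
      · exact sup_le inf_le_left inf_le_left
  · -- irreducible case
    have hint : ∀ S T : Set (Fin m), RowClosed v S → RowClosed v T →
        S.Nonempty → T.Nonempty → (S ∩ T).Nonempty := by
      intro S T hS hT hSne hTne
      by_contra hno
      exact hcase ⟨S, T, hSne, hTne,
        Set.disjoint_iff_inter_eq_empty.mpr (Set.not_nonempty_iff_eq_empty.mp hno), hS, hT⟩
    set M : Matrix (Fin m) (Fin m) ℝ := Matrix.of (fun i j => (v i j : ℝ)) with hM
    have hker : ∀ x ∈ LinearMap.ker M.mulVecLin, ∀ i, ∑ j, (v i j : ℝ) * x j = 0 := by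
      intro x hx i
      have h := congrFun (LinearMap.mem_ker.mp hx) i
      simpa [hM, Matrix.mulVecLin_apply, Matrix.mulVec, dotProduct] using h
    have hrange : LinearMap.range (Matrix.mulVecLin M.transpose) ≤ latticeSpan L := by
      rintro w ⟨c, rfl⟩
      have heq : M.transpose.mulVecLin c = ∑ i, c i • r i := by
        rw [Matrix.mulVecLin_apply]
        funext j
        simp [Matrix.mulVec, dotProduct, Matrix.transpose_apply, hM, hr,
          Finset.sum_apply, mul_comm]
      rw [heq]
      exact Submodule.sum_mem _ (fun i _ => Submodule.smul_mem _ _ (hrL i))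
    have hrk : M.transpose.rank ≤ Module.finrank ℝ (latticeSpan L) :=
      Submodule.finrank_mono hrange
    have hrank_lt : M.rank < m - 1 := by
      rw [← Matrix.rank_transpose]
      exact lt_of_le_of_lt hrk hdim
    have hnull : 2 ≤ Module.finrank ℝ (LinearMap.ker M.mulVecLin) := by
      have h1 := LinearMap.finrank_range_add_finrank_ker M.mulVecLin
      rw [Module.finrank_fin_fun] at h1
      have h2 : M.rank = Module.finrank ℝ (LinearMap.range M.mulVecLin) := rfl
      rw [h2] at hrank_lt
      omega
    have hKne : LinearMap.ker M.mulVecLin ≠ ⊥ := by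
      intro hb
      rw [hb] at hnull
      simp at hnull
    obtain ⟨x, hxK, hx0⟩ := Submodule.exists_mem_ne_zero_of_ne_bot hKne
    have hnotle : ¬ (LinearMap.ker M.mulVecLin ≤ Submodule.span ℝ {x}) := by
      intro hle
      have h3 := Submodule.finrank_mono hle
      rw [finrank_span_singleton hx0] at h3
      omega
    obtain ⟨y, hyK, hynot⟩ := SetLike.not_le_iff_exists.mp hnotle
    have hy0 : y ≠ 0 := fun h => hynot (h ▸ Submodule.zero_mem _)
    obtain ⟨S, a, hSne, hSc, ha0, hSa⟩ :=
      aux_const_closed (by omega) v hnn hsum x (hker x hxK) hx0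
    obtain ⟨T, b, hTne, hTc, hb0, hTb⟩ :=
      aux_const_closed (by omega) v hnn hsum y (hker y hyK) hy0
    set z : Fin m → ℝ := fun j => a * y j - b * x j with hz
    have hzker : ∀ i, ∑ j, (v i j : ℝ) * z j = 0 := by
      intro i
      have hq : ∀ j, (v i j : ℝ) * z j
          = a * ((v i j : ℝ) * y j) - b * ((v i j : ℝ) * x j) := by
        intro j; simp only [hz]; ring
      rw [Finset.sum_congr rfl (fun j _ => hq j), Finset.sum_sub_distrib,
        ← Finset.mul_sum, ← Finset.mul_sum, hker y hyK i, hker x hxK i]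
      ring
    have hz0 : z ≠ 0 := by
      intro h0
      apply hynot
      rw [Submodule.mem_span_singleton]
      refine ⟨b / a, ?_⟩
      funext j
      have h4 := congrFun h0 j
      simp only [hz, Pi.zero_apply] at h4
      simp only [Pi.smul_apply, smul_eq_mul]
      field_simp
      linear_combination -h4
    obtain ⟨U, d, hUne, hUc, hd0, hUd⟩ :=
      aux_const_closed (by omega) v hnn hsum z hzker hz0
    obtain ⟨k, hkU, hkST⟩ :=
      hint U (S ∩ T) hUc (rowClosed_inter hSc hTc) hUne (hint S T hSc hTc hSne hTne)
    have e1 : z k = d := hUd k hkU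
    have e2 : x k = a := hSa k hkST.1
    have e3 : y k = b := hTb k hkST.2
    simp only [hz, e2, e3] at e1
    apply hd0
    rw [← e1]
    ring
end

section
/- Let L ⊆ ℤ^m be a lattice and let C = [c_1, …, c_n] ⊆ ℤ^m be a finitely generated cone. Then there exists a finite set B ⊆ C, consisting of points of C that are not lonely with respect to L, such that the set of all points of C that are not lonely with respect to L equals the finite union ⋃_{b ∈ B} (b + C), where b + C = {b + w : w ∈ C}. -/
/-!
The cone is the image of `ℕ^n` under the additive map `β ↦ ∑ βⱼ cⱼ`, and the non-lonely points
of the cone are stable under translation by the cone (a partner `u` of `v` gives the partner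
`u + w` of `v + w`). Hence their preimage in `ℕ^n` is a semigroup ideal of `ℕ^n`, which is
finitely generated by Dickson's lemma; the images of its generators form `B`.
-/

section

variable {m n : ℕ}

theorem not_isLonely_add {L : AddSubgroup (Fin m → ℤ)} {A : Set (Fin m → ℤ)} {v w : Fin m → ℤ}
    (hA : ∀ u ∈ A, u + w ∈ A) (hv : v ∈ A) (hnl : ¬ IsLonely L A v) :
    ¬ IsLonely L A (v + w) := by
  rintro ⟨-, hlonely⟩
  refine hnl ⟨hv, fun u hu hne huv => hlonely (u + w) (hA u hu) ?_ ?_⟩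
  · exact fun h => hne (add_right_cancel h)
  · rwa [add_sub_add_right_eq_sub]

def coneMap (c : Fin n → (Fin m → ℤ)) : (Fin n → ℕ) →+ (Fin m → ℤ) where
  toFun β := ∑ j, (β j : ℤ) • c j
  map_zero' := by simp
  map_add' β γ := by simp [add_smul, Finset.sum_add_distrib]

theorem coneMap_apply (c : Fin n → (Fin m → ℤ)) (β : Fin n → ℕ) :
    coneMap c β = ∑ j, (β j : ℤ) • c j :=
  rfl

theorem mem_coneGen_iff {c : Fin n → (Fin m → ℤ)} {v : Fin m → ℤ} :
    v ∈ coneGen c ↔ ∃ β, coneMap c β = v := by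
  simp only [coneGen, Set.mem_ofPred_eq, coneMap_apply, eq_comm]

theorem coneMap_mem_coneGen (c : Fin n → (Fin m → ℤ)) (β : Fin n → ℕ) :
    coneMap c β ∈ coneGen c :=
  mem_coneGen_iff.2 ⟨β, rfl⟩

theorem add_mem_coneGen {c : Fin n → (Fin m → ℤ)} {u w : Fin m → ℤ}
    (hu : u ∈ coneGen c) (hw : w ∈ coneGen c) : u + w ∈ coneGen c := by
  obtain ⟨β, rfl⟩ := mem_coneGen_iff.1 hu
  obtain ⟨γ, rfl⟩ := mem_coneGen_iff.1 hw
  exact mem_coneGen_iff.2 ⟨β + γ, map_add _ _ _⟩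

def nonLonelyIdeal (L : AddSubgroup (Fin m → ℤ)) (c : Fin n → (Fin m → ℤ)) :
    AddSemigroupIdeal (Fin n → ℕ) where
  carrier := {β | ¬ IsLonely L (coneGen c) (coneMap c β)}
  vadd_mem' γ β hβ := by
    rw [Set.mem_ofPred_eq, vadd_eq_add, add_comm, map_add]
    exact not_isLonely_add (fun u hu => add_mem_coneGen hu (coneMap_mem_coneGen c γ))
      (coneMap_mem_coneGen c β) hβ

end

theorem stmt_17 {m n : ℕ} (L : AddSubgroup (Fin m → ℤ)) (c : Fin n → (Fin m → ℤ)) :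
    ∃ B : Finset (Fin m → ℤ),
      (∀ b ∈ B, b ∈ coneGen c ∧ ¬ IsLonely L (coneGen c) b) ∧
      {v | v ∈ coneGen c ∧ ¬ IsLonely L (coneGen c) v}
        = ⋃ b ∈ B, {v | ∃ w ∈ coneGen c, v = b + w} := by
  obtain ⟨S, hS⟩ := AddSemigroupIdeal.fg_iff.1
    (AddSemigroupIdeal.fg_of_wellQuasiOrderedLE (nonLonelyIdeal L c))
  have hS_sub : ∀ μ ∈ S, μ ∈ nonLonelyIdeal L c := fun μ hμ =>
    hS ▸ AddSemigroupIdeal.subset_closure hμ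
  refine ⟨S.image (coneMap c), ?_, ?_⟩
  · simp only [Finset.mem_image, forall_exists_index, and_imp]
    rintro _ μ hμ rfl
    exact ⟨coneMap_mem_coneGen c μ, hS_sub μ hμ⟩
  ext v
  simp only [Set.mem_ofPred_eq, Set.mem_iUnion, Finset.mem_image, exists_prop]
  constructor
  · rintro ⟨hv, hnl⟩
    obtain ⟨β, rfl⟩ := mem_coneGen_iff.1 hv
    have hβ : β ∈ AddSemigroupIdeal.closure (S : Set (Fin n → ℕ)) := hS ▸ hnl
    obtain ⟨γ, μ, hμ, rfl⟩ := AddSemigroupIdeal.mem_closure''.1 hβ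
    exact ⟨coneMap c μ, ⟨μ, hμ, rfl⟩, coneMap c γ, coneMap_mem_coneGen c γ, by
      rw [map_add, add_comm]⟩
  · rintro ⟨_, ⟨μ, hμ, rfl⟩, w, hw, rfl⟩
    exact ⟨add_mem_coneGen (coneMap_mem_coneGen c μ) hw,
      not_isLonely_add (fun u hu => add_mem_coneGen hu hw) (coneMap_mem_coneGen c μ)
        (hS_sub μ hμ)⟩
end

section
/- Let L ⊆ ℤ² be a lattice with L ≠ {0}. Then the number of lonely points of dS ∩ ℤ² with respect to L is bounded as d → ∞: there exists N ∈ ℕ such that for every d ∈ ℕ the set of lonely points of dS ∩ ℤ² with respect to L has at most N elements. -/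
lemma lonely_key (L : AddSubgroup (Fin 2 → ℤ)) (u : Fin 2 → ℤ) (huL : u ∈ L)
    (hu0 : u ≠ 0) (d : ℕ) (v : Fin 2 → ℤ) (hv : IsLonely L (simplexPts 2 d) v) :
    (0 ≤ v 0 ∧ 0 ≤ v 1 ∧ v 0 + v 1 ≤ (d : ℤ)) ∧
    ¬(0 ≤ v 0 + u 0 ∧ 0 ≤ v 1 + u 1 ∧ v 0 + u 0 + (v 1 + u 1) ≤ (d : ℤ)) ∧
    ¬(0 ≤ v 0 - u 0 ∧ 0 ≤ v 1 - u 1 ∧ v 0 - u 0 + (v 1 - u 1) ≤ (d : ℤ)) := by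
  obtain ⟨hvA, hlone⟩ := hv
  have hP : v + u ∉ simplexPts 2 d := fun h =>
    hlone _ h (fun he => hu0 (add_eq_left.mp he)) (by simpa using huL)
  have hQ : v - u ∉ simplexPts 2 d := fun h =>
    hlone _ h (fun he => hu0 (sub_eq_self.mp he)) (by simpa using L.neg_mem huL)
  simp only [simplexPts, Set.mem_setOf_eq, Fin.forall_fin_two, Fin.sum_univ_two,
    Pi.add_apply, Pi.sub_apply, not_and, not_le] at hvA hP hQ
  refine ⟨⟨hvA.1.1, hvA.1.2, hvA.2⟩, ?_, ?_⟩ <;> rintro ⟨h1, h2, h3⟩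
  · exact absurd h3 (not_le.mpr (hP ⟨h1, h2⟩))
  · exact absurd h3 (not_le.mpr (hQ ⟨h1, h2⟩))

theorem stmt_18 (L : AddSubgroup (Fin 2 → ℤ)) (hL : L ≠ ⊥) :
    ∃ N : ℕ, ∀ d : ℕ, {v | IsLonely L (simplexPts 2 d) v}.ncard ≤ N := by
  have hex : ∃ u ∈ L, u ≠ 0 := by
    by_contra h
    push_neg at h
    exact hL (AddSubgroup.eq_bot_iff_forall L |>.mpr h)
  obtain ⟨u, huL, hu0⟩ := hex
  set a : ℤ := u 0 with ha
  set b : ℤ := u 1 with hb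
  have hab : a ≠ 0 ∨ b ≠ 0 := by
    by_contra h
    push_neg at h
    exact hu0 (funext fun j => by fin_cases j <;> simp [h.1, h.2, ← ha, ← hb])
  set M : ℤ := (a.natAbs : ℤ) + (b.natAbs : ℤ) with hM
  refine ⟨((Finset.Icc (0:ℤ) M) ×ˢ (Finset.Icc (0:ℤ) M) ×ˢ (Finset.Icc (-M) (0:ℤ))).card, ?_⟩
  intro d
  have h := Set.ncard_le_ncard_of_injOn
    (f := fun v : Fin 2 → ℤ => (min (v 0) M, min (v 1) M, max (v 0 + v 1 - d) (-M)))
    (s := {v | IsLonely L (simplexPts 2 d) v})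
    (t := ↑((Finset.Icc (0:ℤ) M) ×ˢ (Finset.Icc (0:ℤ) M) ×ˢ (Finset.Icc (-M) (0:ℤ))))
    ?_ ?_ (Finset.finite_toSet _)
  · rwa [Set.ncard_coe_finset] at h
  · intro v hv
    obtain ⟨⟨hx, hy, hs⟩, hP, hQ⟩ := lonely_key L u huL hu0 d v hv
    simp only [Finset.coe_product, Set.mem_prod, Finset.mem_coe, Finset.mem_Icc]
    refine ⟨⟨?_, ?_⟩, ⟨?_, ?_⟩, ?_, ?_⟩ <;> omega
  · have tri : ∀ z : Fin 2 → ℤ, IsLonely L (simplexPts 2 d) z →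
        (0 ≤ z 0 ∧ 0 ≤ z 1 ∧ z 0 + z 1 ≤ (d : ℤ)) ∧
        ((z 0 < M ∧ z 1 < M) ∨ (M ≤ z 0 ∧ z 1 < M ∧ (d : ℤ) - M < z 0 + z 1) ∨
          (z 0 < M ∧ M ≤ z 1 ∧ (d : ℤ) - M < z 0 + z 1)) := by
      intro z hz
      obtain ⟨⟨hx, hy, hs⟩, hP, hQ⟩ := lonely_key L u huL hu0 d z hz
      omega
    intro v hv w hw heq
    obtain ⟨⟨hx, hy, hs⟩, htv⟩ := tri v hv
    obtain ⟨⟨hx', hy', hs'⟩, htw⟩ := tri w hw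
    simp only [Prod.mk.injEq] at heq
    obtain ⟨e1, e2, e3⟩ := heq
    have h0 : v 0 = w 0 := by omega
    have h1 : v 1 = w 1 := by omega
    funext j
    fin_cases j
    · exact h0
    · exact h1
end

section
/- Let L = ⟨(2, −3)⟩ ⊆ ℤ² be the lattice generated by the vector (2, −3). Then for every integer d ≥ 4, the set of lonely points of dS ∩ ℤ² with respect to L has exactly 9 elements. -/
lemma mem_simplex_iff (d : ℕ) (v : Fin 2 → ℤ) :
    v ∈ simplexPts 2 d ↔ 0 ≤ v 0 ∧ 0 ≤ v 1 ∧ v 0 + v 1 ≤ (d : ℤ) := by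
  simp [simplexPts, Fin.forall_fin_two, Fin.sum_univ_two, and_assoc]

lemma lonely_char (d : ℕ) (v : Fin 2 → ℤ) :
    IsLonely (AddSubgroup.zmultiples ![(2 : ℤ), -3]) (simplexPts 2 d) v ↔
      0 ≤ v 0 ∧ 0 ≤ v 1 ∧ v 0 + v 1 ≤ (d : ℤ) ∧ v 1 ≤ 2 ∧
        (v 0 ≤ 1 ∨ v 0 + v 1 = (d : ℤ)) := by
  constructor
  · rintro ⟨hv, h⟩
    rw [mem_simplex_iff] at hv
    obtain ⟨h0, h1, hs⟩ := hv
    refine ⟨h0, h1, hs, ?_, ?_⟩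
    · by_contra hy
      push_neg at hy
      have := h (v + ![2, -3]) ?_ ?_ ?_
      · exact this
      · rw [mem_simplex_iff]
        simp
        omega
      · intro hwv
        have := congrFun hwv 1
        simp at this
      · have : v + ![2, -3] - v = ![2, -3] := by ring
        rw [this]
        exact AddSubgroup.mem_zmultiples _
    · by_contra hx
      push_neg at hx
      have := h (v - ![2, -3]) ?_ ?_ ?_
      · exact this
      · rw [mem_simplex_iff]
        simp
        omega
      · intro hwv
        have := congrFun hwv 1
        simp at this
      · have : v - ![2, -3] - v = (-1 : ℤ) • ![2, -3] := by
          funext i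
          fin_cases i <;> (show _ = _; simp [Matrix.vecHead, Matrix.vecTail]; try omega)
        rw [this]
        exact AddSubgroup.zsmul_mem _ (AddSubgroup.mem_zmultiples _) _
  · rintro ⟨h0, h1, hs, hy, hx⟩
    refine ⟨(mem_simplex_iff d v).2 ⟨h0, h1, hs⟩, ?_⟩
    rintro w hw hne hmem
    rw [AddSubgroup.mem_zmultiples_iff] at hmem
    obtain ⟨k, hk⟩ := hmem
    rw [mem_simplex_iff] at hw
    have e0 : w 0 = v 0 + 2 * k := by
      have := congrFun hk 0
      simp [sub_eq_iff_eq_add] at this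
      omega
    have e1 : w 1 = v 1 - 3 * k := by
      have := congrFun hk 1
      simp [sub_eq_iff_eq_add] at this
      omega
    have hk0 : k ≠ 0 := by
      rintro rfl
      simp at e0 e1
      apply hne
      funext i
      fin_cases i
      · show w 0 = v 0; omega
      · show w 1 = v 1; omega
    omega

theorem stmt_19 (d : ℕ) (hd : 4 ≤ d) :
    {v | IsLonely (AddSubgroup.zmultiples ![(2 : ℤ), -3]) (simplexPts 2 d) v}.ncard
      = 9 := by
  have hset : {v | IsLonely (AddSubgroup.zmultiples ![(2 : ℤ), -3]) (simplexPts 2 d) v}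
      = (({![0,0], ![1,0], ![0,1], ![1,1], ![0,2], ![1,2],
          ![(d:ℤ),0], ![(d:ℤ)-1,1], ![(d:ℤ)-2,2]} : Finset (Fin 2 → ℤ)) : Set (Fin 2 → ℤ)) := by
    ext v
    simp only [Set.mem_setOf_eq, lonely_char, Finset.coe_insert, Set.mem_insert_iff,
      Finset.coe_singleton, Set.mem_singleton_iff, funext_iff, Fin.forall_fin_two]
    simp only [Matrix.cons_val_zero, Matrix.cons_val_one, Matrix.head_cons]
    omega
  rw [hset, Set.ncard_coe_finset]
  repeat rw [Finset.card_insert_of_notMem (by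
    simp only [Finset.mem_insert, Finset.mem_singleton, funext_iff, Fin.forall_fin_two,
      Matrix.cons_val_zero, Matrix.cons_val_one, Matrix.head_cons]
    omega)]
  simp
end
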